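/- If X ⊂ ℝ is ν-porous on scales 0 to 1, then its closed h-neighborhood X(h) = X + [-h,h] is (ν/3)-porous on scales (3/ν)·h to 1, for any 0 < h < 1. -/
import Mathlib


open Pointwise

/-- `X` is `ν`-porous on scales `amin` to `amax`. -/
def IsPorous (X : Set ℝ) (ν amin amax : ℝ) : Prop :=
  ∀ a b : ℝ, a < b → amin ≤ b - a → b - a ≤ amax →
    ∃ c d : ℝ, a ≤ c ∧ d ≤ b ∧ d - c = ν * (b - a) ∧ X ∩ Set.Icc c d = ∅

/-- If `X ⊂ ℝ` is `ν`-porous on scales `0` to `1`, then its closed `h`-neighborhood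
`X(h) = X + [-h,h]` is `ν/3`-porous on scales `(3/ν)h` to `1`, for `0 < h < 1`. -/
theorem stmt5 (X : Set ℝ) (ν h : ℝ) (hν : 0 < ν) (hh0 : 0 < h) (hh1 : h < 1)
    (hp : IsPorous X ν 0 1) :
    IsPorous (X + Set.Icc (-h) h) (ν / 3) (3 / ν * h) 1 := by
  intro a b hab hmin hmax
  obtain ⟨c, d, hac, hdb, hlen, hempty⟩ := hp a b hab (by linarith) hmax
  have h3 : 3 * h ≤ ν * (b - a) := by
    have key : ν * (3 / ν * h) = 3 * h := by field_simp
    nlinarith [mul_le_mul_of_nonneg_left hmin hν.le]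
  refine ⟨c + h, c + h + ν / 3 * (b - a), by linarith, by linarith, by ring, ?_⟩
  ext y
  simp only [Set.mem_inter_iff, Set.mem_Icc, Set.mem_empty_iff_false, iff_false]
  rintro ⟨⟨x, hx, t, ht, rfl⟩, hy1, hy2⟩
  simp only [Set.mem_Icc] at ht
  simp only at hy1 hy2
  have : x ∈ X ∩ Set.Icc c d := ⟨hx, by constructor <;> nlinarith⟩
  rw [hempty] at this
  exact this
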